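/- Let (S,𝔉,τ) be a PM space with continuous triangle function and I a strongly admissible ideal. Suppose x = {x_{jk}} is a strong I-statistically pre-Cauchy double sequence in S possessing a subsequence {x_{t_j t_k}} that strongly converges to L, where 0 < I-liminf_{m,n} (1/(mn)) |{(t_j,t_k) : t_j ≤ m, t_k ≤ n}| < ∞. Then x is strong I-statistically convergent to L. -/

import Mathlib

open Set

/-- A distance distribution function. -/
structure DDF where
  toFun : ℝ → ℝ
  mono' : Monotone toFun
  nonneg' : ∀ x, 0 ≤ toFun x
  le_one' : ∀ x, toFun x ≤ 1
  zero' : ∀ x ≤ 0, toFun x = 0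
  tendsto_one' : Filter.Tendsto toFun Filter.atTop (nhds 1)
  leftCont' : ∀ x > 0, ContinuousWithinAt toFun (Set.Iio x) x

instance : CoeFun DDF fun _ => ℝ → ℝ := ⟨DDF.toFun⟩

/-- The unit step at 0. -/
noncomputable def eps0 : DDF where
  toFun x := if 0 < x then 1 else 0
  mono' := by
    intro a b hab
    by_cases ha : 0 < a
    · simp [ha, lt_of_lt_of_le ha hab]
    · by_cases hb : 0 < b <;> simp [ha, hb]
  nonneg' := by intro x; split_ifs <;> norm_num
  le_one' := by intro x; split_ifs <;> norm_num
  zero' := by intro x hx; simp [not_lt.mpr hx]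
  tendsto_one' := by
    have h : (fun _ : ℝ => (1 : ℝ)) =ᶠ[Filter.atTop]
        fun x : ℝ => if 0 < x then (1:ℝ) else 0 := by
      filter_upwards [Filter.eventually_gt_atTop (0:ℝ)] with x hx
      simp [hx]
    exact tendsto_const_nhds.congr' h
  leftCont' := by
    intro x hx
    have h : (fun _ : ℝ => (1 : ℝ)) =ᶠ[nhdsWithin x (Set.Iio x)]
        fun y : ℝ => if 0 < y then (1:ℝ) else 0 := by
      have hev : ∀ᶠ y in nhds x, (0:ℝ) < y := eventually_gt_nhds hx
      filter_upwards [nhdsWithin_le_nhds hev] with y hy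
      simp [hy]
    have : Filter.Tendsto (fun y : ℝ => if 0 < y then (1:ℝ) else 0)
        (nhdsWithin x (Set.Iio x)) (nhds 1) := tendsto_const_nhds.congr' h
    simpa [ContinuousWithinAt, hx] using this

/-- The modified Lévy metric on distance distribution functions. -/
noncomputable def dL (F G : DDF) : ℝ :=
  sInf {h : ℝ | 0 < h ∧ h ≤ 1 ∧ ∀ x : ℝ, 0 < x → x < 1 / h →
    (F (x - h) - h ≤ G x ∧ G x ≤ F (x + h) + h ∧
     G (x - h) - h ≤ F x ∧ F x ≤ G (x + h) + h)}

/-- A probabilistic metric space under a triangle function. -/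
structure PMSpace (S : Type*) where
  F : S → S → DDF
  tri : DDF → DDF → DDF
  F_self : ∀ a, F a a = eps0
  F_ne : ∀ a b, a ≠ b → F a b ≠ eps0
  F_symm : ∀ a b, F a b = F b a
  F_triangle : ∀ a b c, ∀ x : ℝ, (tri (F a b) (F b c)) x ≤ (F a c) x
  tri_comm : ∀ G H, tri G H = tri H G
  tri_assoc : ∀ G H K, tri (tri G H) K = tri G (tri H K)
  tri_mono : ∀ G G' H, (∀ x, G x ≤ G' x) → ∀ x, (tri G H) x ≤ (tri G' H) x
  tri_id : ∀ G, tri eps0 G = G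

/-- Continuity of the triangle function with respect to the Lévy metric. -/
def TriContinuous {S : Type*} (P : PMSpace S) : Prop :=
  ∀ G H : DDF, ∀ ε > 0, ∃ η > 0, ∀ G' H' : DDF,
    dL G G' < η → dL H H' < η → dL (P.tri G H) (P.tri G' H') < ε

/-- Ideals, admissibility. -/
def IsIdeal {α : Type*} (I : Set (Set α)) : Prop :=
  ∅ ∈ I ∧ (∀ A B : Set α, A ∈ I → B ∈ I → A ∪ B ∈ I) ∧
    (∀ A B : Set α, B ⊆ A → A ∈ I → B ∈ I)

def Admissible (I : Set (Set (ℕ × ℕ))) : Prop :=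
  IsIdeal I ∧ Set.univ ∉ I ∧ ∀ p : ℕ × ℕ, ({p} : Set (ℕ × ℕ)) ∈ I

def StronglyAdmissible (I : Set (Set (ℕ × ℕ))) : Prop :=
  IsIdeal I ∧ Set.univ ∉ I ∧
    ∀ i : ℕ, ({i} ×ˢ (Set.univ : Set ℕ)) ∈ I ∧ ((Set.univ : Set ℕ) ×ˢ {i}) ∈ I

/-- `dens A m n` is `(1/(mn)) |{(j,k) ∈ A : j ≤ m, k ≤ n}|`. -/
noncomputable def dens (A : Set (ℕ × ℕ)) (m n : ℕ) : ℝ :=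
  ({jk ∈ A | 1 ≤ jk.1 ∧ jk.1 ≤ m ∧ 1 ≤ jk.2 ∧ jk.2 ≤ n}.ncard : ℝ) / (m * n)

/-- `dens2 A m n` is `(1/(m²n²)) |{((j,k),(p,q)) ∈ A : j,p ≤ m, k,q ≤ n}|`. -/
noncomputable def dens2 (A : Set ((ℕ × ℕ) × (ℕ × ℕ))) (m n : ℕ) : ℝ :=
  ({q ∈ A | 1 ≤ q.1.1 ∧ q.1.1 ≤ m ∧ 1 ≤ q.2.1 ∧ q.2.1 ≤ m ∧
      1 ≤ q.1.2 ∧ q.1.2 ≤ n ∧ 1 ≤ q.2.2 ∧ q.2.2 ≤ n}.ncard : ℝ) /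
    ((m : ℝ) ^ 2 * (n : ℝ) ^ 2)

variable {S : Type*}

/-- Strong `I`-statistical convergence via strong neighbourhoods `N_a(t)`. -/
def StrongIStatConv (I : Set (Set (ℕ × ℕ))) (P : PMSpace S)
    (x : ℕ → ℕ → S) (a : S) : Prop :=
  ∀ t > (0:ℝ), ∀ δ > (0:ℝ),
    {mn : ℕ × ℕ | δ ≤ dens
      {jk : ℕ × ℕ | ¬ (1 - t < (P.F a (x jk.1 jk.2)) t)} mn.1 mn.2} ∈ I

/-- Strong `I`-statistically pre-Cauchy via strong vicinities `𝔘(t)`. -/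
def StrongIStatPreCauchy (I : Set (Set (ℕ × ℕ))) (P : PMSpace S)
    (x : ℕ → ℕ → S) : Prop :=
  ∀ t > (0:ℝ), ∀ δ > (0:ℝ),
    {mn : ℕ × ℕ | δ ≤ dens2
      {q : (ℕ × ℕ) × (ℕ × ℕ) |
        ¬ (1 - t < (P.F (x q.1.1 q.1.2) (x q.2.1 q.2.2)) t)} mn.1 mn.2} ∈ I

/-- `A_y = {α : {(j,k) : y_{jk} < α} ∉ I}`, used for `I-liminf`. -/
def ASet (I : Set (Set (ℕ × ℕ))) (y : ℕ → ℕ → ℝ) : Set ℝ :=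
  {α : ℝ | {jk : ℕ × ℕ | y jk.1 jk.2 < α} ∉ I}

open Classical in
/-- `I-liminf y := inf A_y` if `A_y ≠ ∅`, and `∞` otherwise (in `EReal`). -/
noncomputable def ILiminf (I : Set (Set (ℕ × ℕ))) (y : ℕ → ℕ → ℝ) : EReal :=
  if ASet I y = ∅ then ⊤ else sInf ((fun a : ℝ => (a : EReal)) '' ASet I y)

/-! Continuity of `τ` at `(ε₀, ε₀)` gives `r > 0` with `𝔘(r) ∘ 𝔘(r) ⊆ 𝔘(s)`. Beyond an index `N`
the subsequence lies in `N_L(r)`, so every tail index `(t_j, t_k)` is `r`-far from every `(j', k')`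
with `x_{j'k'} ∉ N_L(s)`: the pair density of `r`-far pairs is at least the product of the density
of the tail and that of the bad indices. Discarding the first `N` rows and columns costs `N/m + N/n`,
so the positive `I`-liminf keeps the tail density above some `γ/2` off a set in `I`, and the
pre-Cauchy condition then forces the bad density below `δ` off a set in `I`. -/

lemma dL_eps0_lt {F : DDF} {h η : ℝ} (h0 : 0 < h) (h1 : h ≤ 1) (hη : h < η)
    (hF : 1 - h < F h) : dL eps0 F < η := by
  refine lt_of_le_of_lt (csInf_le ⟨0, fun h' hh' => hh'.1.le⟩ ⟨h0, h1, fun x hx _ => ?_⟩) hη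
  have hFx : ∀ y, h ≤ y → 1 - h < F y := fun y hy => hF.trans_le (F.mono' hy)
  have hpos : 0 < x + h := by linarith
  simp only [eps0, hx, hpos, if_true]
  refine ⟨?_, ?_, ?_, ?_⟩
  · split_ifs with hxh
    · linarith [hFx x (by linarith)]
    · linarith [F.nonneg' x]
  · linarith [F.le_one' x]
  · linarith [F.le_one' (x - h)]
  · linarith [hFx (x + h) (by linarith)]

lemma lt_apply_of_dL_eps0_lt {F : DDF} {s : ℝ} (hs0 : 0 < s) (hs1 : s < 1)
    (hd : dL eps0 F < s) : 1 - s < F s := by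
  unfold dL at hd
  obtain ⟨h, ⟨h0, h1, hcond⟩, hhs⟩ := exists_lt_of_csInf_lt
    (by exact ⟨1, one_pos, le_rfl, fun x _ _ =>
      ⟨by linarith [eps0.le_one' (x - 1), F.nonneg' x],
       by linarith [F.le_one' x, eps0.nonneg' (x + 1)],
       by linarith [F.le_one' (x - 1), eps0.nonneg' x],
       by linarith [eps0.le_one' x, F.nonneg' (x + 1)]⟩⟩) hd
  have hs : s < 1 / h := by rw [lt_div_iff₀ h0]; nlinarith
  have key := (hcond s hs0 hs).1
  simp only [eps0, sub_pos.2 hhs, if_true] at key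
  linarith

theorem TriContinuous.exists_vicinity_comp_subset {P : PMSpace S} (hτ : TriContinuous P)
    {s : ℝ} (hs : 0 < s) :
    ∃ r > 0, ∀ a b c : S, 1 - r < P.F b a r → 1 - r < P.F b c r → 1 - s < P.F a c s := by
  set s' := min s (1 / 2)
  have hs' : 0 < s' := lt_min hs one_half_pos
  obtain ⟨η, hη, hcont⟩ := hτ eps0 eps0 s' hs'
  set r := min (η / 2) 1
  have hr0 : 0 < r := lt_min (half_pos hη) one_pos
  have hr1 : r ≤ 1 := min_le_right _ _
  have hrη : r < η := (min_le_left _ _).trans_lt (half_lt_self hη)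
  refine ⟨r, hr0, fun a b c hba hbc => ?_⟩
  have hd := hcont _ _ (dL_eps0_lt hr0 hr1 hrη hba) (dL_eps0_lt hr0 hr1 hrη hbc)
  rw [P.tri_id] at hd
  have htri := P.F_triangle a b c s'
  rw [P.F_symm a b] at htri
  calc 1 - s ≤ 1 - s' := by linarith [min_le_left s (1 / 2)]
    _ < P.tri (P.F b a) (P.F b c) s' :=
      lt_apply_of_dL_eps0_lt hs' ((min_le_right _ _).trans_lt one_half_lt_one) hd
    _ ≤ P.F a c s' := htri
    _ ≤ P.F a c s := (P.F a c).mono' (min_le_left _ _)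

section Ideal

variable {α : Type*} {I : Set (Set α)} {A B : Set α}

lemma IsIdeal.union_mem (hI : IsIdeal I) (hA : A ∈ I) (hB : B ∈ I) : A ∪ B ∈ I :=
  hI.2.1 A B hA hB

lemma IsIdeal.mem_of_subset (hI : IsIdeal I) (hB : B ∈ I) (h : A ⊆ B) : A ∈ I :=
  hI.2.2 B A h hB

end Ideal

lemma StronglyAdmissible.setOf_lt_or_lt_mem {I : Set (Set (ℕ × ℕ))} (hI : StronglyAdmissible I)
    (M : ℕ) : {mn : ℕ × ℕ | mn.1 < M ∨ mn.2 < M} ∈ I := by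
  induction M with
  | zero => simpa using hI.1.1
  | succ M ih =>
    refine hI.1.mem_of_subset (hI.1.union_mem ih (hI.1.union_mem (hI.2.2 M).1 (hI.2.2 M).2)) ?_
    rintro ⟨m, n⟩ hmn
    simp only [mem_ofPred_eq, mem_union, mem_prod, mem_singleton_iff, mem_univ, and_true,
      true_and] at hmn ⊢
    omega

lemma exists_pos_setOf_lt_mem_of_pos_ILiminf {I : Set (Set (ℕ × ℕ))} {y : ℕ → ℕ → ℝ}
    (h : 0 < ILiminf I y) : ∃ γ > 0, {jk : ℕ × ℕ | y jk.1 jk.2 < γ} ∈ I := by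
  obtain ⟨γ, hγ0, hγ⟩ := EReal.lt_iff_exists_real_btwn.1 h
  refine ⟨γ, EReal.coe_pos.1 hγ0, ?_⟩
  by_contra hγA
  refine hγ.not_ge ?_
  rw [ILiminf, if_neg (nonempty_of_mem hγA).ne_empty]
  exact sInf_le ⟨γ, hγA, rfl⟩

def indexBox (m n : ℕ) : Set (ℕ × ℕ) := Icc 1 m ×ˢ Icc 1 n

lemma finite_indexBox (m n : ℕ) : (indexBox m n).Finite :=
  (finite_Icc 1 m).prod (finite_Icc 1 n)

lemma dens_eq_ncard_inter_indexBox (A : Set (ℕ × ℕ)) (m n : ℕ) :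
    dens A m n = ((A ∩ indexBox m n).ncard : ℝ) / (m * n) := by
  unfold dens
  congr 3
  ext ⟨j, k⟩
  simp only [indexBox, mem_sep_iff, mem_inter_iff, mem_prod, mem_Icc]
  tauto

lemma dens_nonneg (A : Set (ℕ × ℕ)) (m n : ℕ) : 0 ≤ dens A m n := by
  unfold dens; positivity

lemma dens2_eq_ncard_inter_indexBox (F : Set ((ℕ × ℕ) × (ℕ × ℕ))) (m n : ℕ) :
    dens2 F m n = ((F ∩ indexBox m n ×ˢ indexBox m n).ncard : ℝ) / ((m * n) * (m * n)) := by
  unfold dens2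
  congr 1
  · congr 2
    ext ⟨⟨j, k⟩, p, q⟩
    simp only [indexBox, mem_inter_iff, mem_prod, mem_Icc, mem_sep_iff]
    tauto
  · ring

lemma dens_mul_dens_le_dens2 {U V : Set (ℕ × ℕ)} {F : Set ((ℕ × ℕ) × (ℕ × ℕ))}
    (h : U ×ˢ V ⊆ F) (m n : ℕ) : dens U m n * dens V m n ≤ dens2 F m n := by
  rw [dens_eq_ncard_inter_indexBox, dens_eq_ncard_inter_indexBox,
    dens2_eq_ncard_inter_indexBox, div_mul_div_comm, ← Nat.cast_mul, ← ncard_prod,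
    ← prod_inter_prod]
  gcongr
  exact ((finite_indexBox m n).prod (finite_indexBox m n)).inter_of_right F

lemma dens_le_dens_tail_add (t : ℕ → ℕ) (N : ℕ) {m n : ℕ} (hm : 0 < m) (hn : 0 < n) :
    dens {p : ℕ × ℕ | ∃ j k : ℕ, p = (t j, t k)} m n ≤
      dens {p : ℕ × ℕ | ∃ j ≥ N, ∃ k ≥ N, p = (t j, t k)} m n + N / m + N / n := by
  set T := {p : ℕ × ℕ | ∃ j k : ℕ, p = (t j, t k)}
  set TN := {p : ℕ × ℕ | ∃ j ≥ N, ∃ k ≥ N, p = (t j, t k)}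
  set E := t '' Iio N
  have hE : E.ncard ≤ N := (ncard_image_le (finite_Iio N)).trans (by simp)
  have hsub : T ∩ indexBox m n ⊆ (TN ∩ indexBox m n) ∪ E ×ˢ Icc 1 n ∪ Icc 1 m ×ˢ E := by
    rintro _ ⟨⟨j, k, rfl⟩, hjm, hkn⟩
    by_cases hj : N ≤ j
    · by_cases hk : N ≤ k
      · exact Or.inl (Or.inl ⟨⟨j, hj, k, hk, rfl⟩, hjm, hkn⟩)
      · exact Or.inr ⟨hjm, k, not_le.1 hk, rfl⟩
    · exact Or.inl (Or.inr ⟨⟨j, not_le.1 hj, rfl⟩, hkn⟩)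
  have hcard : (T ∩ indexBox m n).ncard ≤ (TN ∩ indexBox m n).ncard + N * n + m * N :=
    calc (T ∩ indexBox m n).ncard
        ≤ ((TN ∩ indexBox m n) ∪ E ×ˢ Icc 1 n ∪ Icc 1 m ×ˢ E).ncard :=
          ncard_le_ncard hsub ((((finite_indexBox m n).inter_of_right TN).union
            (((finite_Iio N).image t).prod (finite_Icc 1 n))).union
            ((finite_Icc 1 m).prod ((finite_Iio N).image t)))
      _ ≤ (TN ∩ indexBox m n).ncard + (E ×ˢ Icc 1 n).ncard + (Icc 1 m ×ˢ E).ncard :=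
          (ncard_union_le _ _).trans (Nat.add_le_add_right (ncard_union_le _ _) _)
      _ ≤ (TN ∩ indexBox m n).ncard + N * n + m * N := by
          rw [ncard_prod, ncard_prod, ncard_Icc_nat, ncard_Icc_nat, add_tsub_cancel_right,
            add_tsub_cancel_right]
          gcongr
  rw [dens_eq_ncard_inter_indexBox, dens_eq_ncard_inter_indexBox]
  calc ((T ∩ indexBox m n).ncard : ℝ) / (m * n)
      ≤ ((TN ∩ indexBox m n).ncard + N * n + m * N : ℝ) / (m * n) := by
        gcongr; exact_mod_cast hcard
    _ = _ := by field_simp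

lemma StronglyAdmissible.setOf_dens_tail_lt_mem {I : Set (Set (ℕ × ℕ))}
    (hI : StronglyAdmissible I) (t : ℕ → ℕ) (N : ℕ) {γ ε : ℝ}
    (hγ : {mn : ℕ × ℕ | dens {p : ℕ × ℕ | ∃ j k : ℕ, p = (t j, t k)} mn.1 mn.2 < γ} ∈ I)
    (hε : 0 < ε) :
    {mn : ℕ × ℕ | dens {p : ℕ × ℕ | ∃ j ≥ N, ∃ k ≥ N, p = (t j, t k)} mn.1 mn.2 < γ - ε} ∈ I := by
  obtain ⟨M, hM⟩ := exists_nat_gt (2 * N / ε)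
  have hsmall : ∀ k : ℕ, M < k → (N : ℝ) / k < ε / 2 := fun k hk => by
    have hk' : (M : ℝ) < k := by exact_mod_cast hk
    rw [div_lt_iff₀ hε] at hM
    rw [div_lt_iff₀ (by linarith [M.cast_nonneg (α := ℝ)])]
    nlinarith
  refine hI.1.mem_of_subset (hI.1.union_mem hγ (hI.setOf_lt_or_lt_mem (M + 1))) ?_
  rintro ⟨m, n⟩ htail
  rw [mem_union, or_iff_not_imp_right]
  intro hbig
  simp only [mem_ofPred_eq, not_or, not_lt] at htail hbig ⊢
  calc dens {p : ℕ × ℕ | ∃ j k : ℕ, p = (t j, t k)} m n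
      ≤ dens {p : ℕ × ℕ | ∃ j ≥ N, ∃ k ≥ N, p = (t j, t k)} m n + N / m + N / n :=
        dens_le_dens_tail_add t N (by omega) (by omega)
    _ < γ := by linarith [hsmall m (by omega), hsmall n (by omega)]

lemma IsIdeal.setOf_le_dens_mem_of_prod_subset {I : Set (Set (ℕ × ℕ))} (hI : IsIdeal I)
    {U A : Set (ℕ × ℕ)} {F : Set ((ℕ × ℕ) × (ℕ × ℕ))} (hUA : U ×ˢ A ⊆ F) {β δ : ℝ}
    (hδ : 0 ≤ δ) (hU : {mn : ℕ × ℕ | dens U mn.1 mn.2 < β} ∈ I)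
    (hF : {mn : ℕ × ℕ | β * δ ≤ dens2 F mn.1 mn.2} ∈ I) :
    {mn : ℕ × ℕ | δ ≤ dens A mn.1 mn.2} ∈ I := by
  refine hI.mem_of_subset (hI.union_mem hU hF) ?_
  rintro ⟨m, n⟩ hA
  rw [mem_union, or_iff_not_imp_left]
  intro hUbig
  simp only [mem_ofPred_eq, not_lt] at hA hUbig ⊢
  exact (mul_le_mul hUbig hA hδ (dens_nonneg U m n)).trans (dens_mul_dens_le_dens2 hUA m n)

theorem strongIStatPreCauchy_with_subseq_implies_conv_general
    (P : PMSpace S) (hτ : TriContinuous P)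
    (I : Set (Set (ℕ × ℕ))) (hI : StronglyAdmissible I)
    (x : ℕ → ℕ → S) (hx : StrongIStatPreCauchy I P x)
    (t : ℕ → ℕ) (L : S)
    (hsub : ∀ s > (0:ℝ), ∃ N : ℕ, ∀ j ≥ N, ∀ k ≥ N,
      1 - s < (P.F (x (t j) (t k)) L) s)
    (hliminf :
      0 < ILiminf I (fun m n =>
        dens {p : ℕ × ℕ | ∃ j k : ℕ, p = (t j, t k)} m n) ∧
      ILiminf I (fun m n =>
        dens {p : ℕ × ℕ | ∃ j k : ℕ, p = (t j, t k)} m n) < ⊤) :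
    StrongIStatConv I P x L := by
  intro s hs δ hδ
  obtain ⟨r, hr, hcomp⟩ := hτ.exists_vicinity_comp_subset hs
  obtain ⟨N, hN⟩ := hsub r hr
  obtain ⟨γ, hγ, hγI⟩ := exists_pos_setOf_lt_mem_of_pos_ILiminf hliminf.1
  have htail := hI.setOf_dens_tail_lt_mem t N hγI (half_pos hγ)
  rw [sub_half] at htail
  refine hI.1.setOf_le_dens_mem_of_prod_subset ?_ hδ.le htail (hx r hr _ (by positivity))
  rintro ⟨_, c, d⟩ ⟨⟨j, hj, k, hk, rfl⟩, hbad⟩ hfar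
  exact hbad (hcomp _ _ _ (hN j hj k hk) hfar)

/-- Let `x` be a strong `I`-statistically pre-Cauchy double sequence in a PM
space with continuous triangle function. If `x` has a subsequence
`{x_{t_j t_k}}` strongly converging to `L` with
`0 < I-liminf (1/(mn))|{(t_j,t_k) : t_j ≤ m, t_k ≤ n}| < ∞`, then `x` is strong
`I`-statistically convergent to `L`. -/
theorem strongIStatPreCauchy_with_subseq_implies_conv
    (P : PMSpace S) (hτ : TriContinuous P)
    (I : Set (Set (ℕ × ℕ))) (hI : StronglyAdmissible I)
    (x : ℕ → ℕ → S) (hx : StrongIStatPreCauchy I P x)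
    (t : ℕ → ℕ) (ht : StrictMono t) (L : S)
    (hsub : ∀ s > (0:ℝ), ∃ N : ℕ, ∀ j ≥ N, ∀ k ≥ N,
      1 - s < (P.F (x (t j) (t k)) L) s)
    (hliminf :
      0 < ILiminf I (fun m n =>
        dens {p : ℕ × ℕ | ∃ j k : ℕ, p = (t j, t k)} m n) ∧
      ILiminf I (fun m n =>
        dens {p : ℕ × ℕ | ∃ j k : ℕ, p = (t j, t k)} m n) < ⊤) :
    StrongIStatConv I P x L :=
  strongIStatPreCauchy_with_subseq_implies_conv_general P hτ I hI x hx t L hsub hliminf
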